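/- arXiv:2511.16469 — 2 statements merged into one kernel-verified Lean document; each statement's English description precedes it below -/
import Mathlib

section
/- Let L ≥ 0, γ > 0, λ ∈ (0,1), and suppose τ < T where T is the time at which the solution φ₀ of φ' = −2Lφ − γ(φ²+1), φ(0) = 1/λ, satisfies φ₀(T) = λ. Then there exist λ* ∈ (λ, 1) and η > 0 such that the solution φ of the perturbed ODE φ' = −2Lφ − γ((1+η)φ² + 1) with φ(0) = 1/λ* satisfies φ(τ) = λ* and φ(s) ∈ [λ*, 1/λ*] for all s ∈ [0, τ]. -/
/-!
Along a solution of `φ' = -r(φ)` with `r > 0`, separation of variables gives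
`dt = -dφ / r(φ)`, so the transit time from `1/m` down to `m` is `∫ₘ^{1/m} dx / r(x)`, and
conversely the inverse of `x ↦ -∫_{1/m}^x dx / r` solves the ODE. For the Riccati field
`r_η(x) = 2Lx + γ((1+η)x² + 1)` we have `r_η ≤ (1+η) r_0` on `x ≥ 0`, so the transit time from
`1/λ` is at least `T/(1+η) > τ` for small `η > 0`; it vanishes at `m = 1` and depends
continuously on `m`, so the intermediate value theorem yields `λ* ∈ (λ, 1)` with transit time `τ`.
-/

open Set Real

open Filter Topology MeasureTheory intervalIntegral

theorem le_of_hasDerivAt_of_eq_imp_neg {u d : ℝ → ℝ} {a b c : ℝ}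
    (hd : ∀ s ∈ Icc a b, HasDerivAt u (d s) s) (hneg : ∀ s ∈ Icc a b, u s = c → d s < 0)
    (hb : c ≤ u b) : ∀ s ∈ Icc a b, c ≤ u s := by
  have hrefl : ∀ t ∈ Icc a b, a + b - t ∈ Icc a b := fun t ht =>
    ⟨by linarith [ht.2], by linarith [ht.1]⟩
  -- Reversing time turns the claim into Mathlib's forward fencing lemma.
  have hderiv : ∀ t ∈ Icc a b, HasDerivAt (fun t => -u (a + b - t)) (d (a + b - t)) t := by
    intro t ht
    exact ((hd _ (hrefl t ht)).comp_const_sub (a + b) t).neg.congr_deriv (neg_neg _)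
  have key := image_le_of_deriv_right_lt_deriv_boundary' (f := fun t => -u (a + b - t))
    (B := fun _ => -c) (B' := 0)
    (fun t ht => (hderiv t ht).continuousAt.continuousWithinAt)
    (fun t ht => (hderiv t (Ico_subset_Icc_self ht)).hasDerivWithinAt)
    (by simpa using hb) continuousOn_const (fun t _ => hasDerivWithinAt_const _ _ _)
    (fun t ht he => hneg _ (hrefl t (Ico_subset_Icc_self ht)) (by simpa using he))
  intro s hs
  simpa using key (hrefl s hs)

theorem integral_inv_eq_of_hasDerivAt_eq_neg_comp {r u : ℝ → ℝ} {a T : ℝ}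
    (hr : ContinuousOn r (Ici a)) (hpos : ∀ x ∈ Ici a, 0 < r x) (hT : 0 ≤ T)
    (hu : ∀ s ∈ Icc 0 T, HasDerivAt u (-r (u s)) s) (huT : u T = a) :
    ∫ x in a..u 0, (r x)⁻¹ = T := by
  have hmaps : MapsTo u (Icc 0 T) (Ici a) :=
    le_of_hasDerivAt_of_eq_imp_neg hu
      (fun s _ hs => by rw [hs]; exact neg_neg_of_pos (hpos a self_mem_Ici)) huT.ge
  have hchange := integral_comp_mul_deriv' (f := u) (f' := fun s => -r (u s))
    (g := fun x => (r x)⁻¹) (by rwa [uIcc_of_le hT])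
    (by
      rw [uIcc_of_le hT]
      exact (hr.comp (fun s hs => (hu s hs).continuousAt.continuousWithinAt) hmaps).neg)
    (by
      rw [uIcc_of_le hT]
      exact (hr.inv₀ fun x hx => (hpos x hx).ne').mono hmaps.image_subset)
  have hminus_one : ∫ s in (0)..T, ((fun x => (r x)⁻¹) ∘ u) s * -r (u s) = ∫ _ in (0)..T, -1 := by
    refine integral_congr fun s hs => ?_
    rw [uIcc_of_le hT] at hs
    simp [(hpos _ (hmaps hs)).ne']
  rw [hminus_one, huT, integral_symm a] at hchange
  simpa using hchange.symm

theorem surjective_of_hasDerivAt_of_le {f f' : ℝ → ℝ} {c : ℝ} (hf : ∀ x, HasDerivAt f (f' x) x)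
    (hc : 0 < c) (hle : ∀ x, c ≤ f' x) : Function.Surjective f := by
  have hgrow : ∀ x y, x ≤ y → c * (y - x) ≤ f y - f x :=
    mul_sub_le_image_sub_of_le_deriv (fun x => (hf x).differentiableAt)
      (fun x => (hf x).deriv ▸ hle x)
  refine Continuous.surjective (continuous_iff_continuousAt.2 fun x => (hf x).continuousAt) ?_ ?_
  · refine tendsto_atTop_mono' _ ?_ (tendsto_atTop_add_const_left _ (f 0)
      (tendsto_id.const_mul_atTop hc))
    filter_upwards [eventually_ge_atTop 0] with y hy
    dsimp only [id]
    linarith [hgrow 0 y hy]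
  · refine tendsto_atBot_mono' _ ?_ (tendsto_atBot_add_const_left _ (f 0)
      (tendsto_id.const_mul_atBot hc))
    filter_upwards [eventually_le_atBot 0] with y hy
    dsimp only [id]
    linarith [hgrow y 0 hy]

theorem exists_hasDerivAt_eq_neg_comp {r : ℝ → ℝ} {a b τ : ℝ} (hab : a ≤ b)
    (hr : ContinuousOn r (Icc a b)) (hpos : ∀ x ∈ Icc a b, 0 < r x)
    (hτ : ∫ x in a..b, (r x)⁻¹ = τ) :
    ∃ φ : ℝ → ℝ, (∀ s ∈ Icc 0 τ, HasDerivAt φ (-r (φ s)) s) ∧ φ 0 = b ∧ φ τ = a ∧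
      ∀ s ∈ Icc 0 τ, φ s ∈ Icc a b := by
  -- Extending `r` constantly outside `[a, b]` makes `H` an increasing bijection of `ℝ`,
  -- whose inverse is the solution run backwards in time.
  set g := IccExtend hab ((Icc a b).domRestrict r)
  have hg_eq : ∀ x ∈ Icc a b, g x = r x := fun x hx => IccExtend_of_mem hab _ hx
  have hg_cont : Continuous g := hr.domRestrict.Icc_extend'
  have hg_pos : ∀ x, 0 < g x := fun x => hpos _ (projIcc a b hab x).2
  obtain ⟨xmax, hxmax, hmax⟩ := isCompact_Icc.exists_isMaxOn (nonempty_Icc.2 hab) hr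
  set H : ℝ → ℝ := fun x => ∫ t in b..x, (g t)⁻¹
  have hH : ∀ x, HasDerivAt H (g x)⁻¹ x := fun x =>
    ((hg_cont.inv₀ fun x => (hg_pos x).ne').integral_hasStrictDerivAt b x).hasDerivAt
  let e : ℝ ≃o ℝ := StrictMono.orderIsoOfSurjective H
    (strictMono_of_hasDerivAt_pos hH fun x => inv_pos.2 (hg_pos x))
    (surjective_of_hasDerivAt_of_le hH (inv_pos.2 (hpos _ hxmax))
      fun x => inv_anti₀ (hg_pos x) (hmax (projIcc a b hab x).2))
  have heb : e b = 0 := integral_same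
  have hea : e a = -τ := by
    change ∫ t in b..a, (g t)⁻¹ = -τ
    rw [integral_symm, ← hτ]
    congr 1
    refine integral_congr fun x hx => ?_
    rw [uIcc_of_le hab] at hx
    simp only [hg_eq x hx]
  have hrange : ∀ s ∈ Icc 0 τ, e.symm (-s) ∈ Icc a b := fun s hs =>
    ⟨e.le_symm_apply.2 (by linarith [hs.2]), e.symm_apply_le.2 (by linarith [hs.1])⟩
  refine ⟨fun s => e.symm (-s), fun s hs => ?_, ?_, ?_, hrange⟩
  · have hsymm : HasDerivAt e.symm ((g (e.symm (-s)))⁻¹)⁻¹ (-s) :=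
      HasDerivAt.of_local_left_inverse e.symm.continuous.continuousAt (hH _)
        (inv_ne_zero (hg_pos _).ne') (Eventually.of_forall e.apply_symm_apply)
    refine (hsymm.comp s (hasDerivAt_neg s)).congr_deriv ?_
    rw [inv_inv, hg_eq _ (hrange s hs), mul_neg_one]
  · exact e.symm_apply_eq.2 (by rw [neg_zero, heb])
  · exact e.symm_apply_eq.2 hea.symm

noncomputable def riccatiField (L γ η x : ℝ) : ℝ := 2 * L * x + γ * ((1 + η) * x ^ 2 + 1)

noncomputable def transitTime (L γ η m : ℝ) : ℝ := ∫ x in m..1 / m, (riccatiField L γ η x)⁻¹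

section Riccati

variable {L γ η : ℝ}

theorem continuous_riccatiField : Continuous (riccatiField L γ η) := by
  unfold riccatiField
  fun_prop

theorem riccatiField_pos (hL : 0 ≤ L) (hγ : 0 < γ) (hη : 0 ≤ η) {x : ℝ} (hx : 0 ≤ x) :
    0 < riccatiField L γ η x := by
  unfold riccatiField
  positivity

theorem riccatiField_le_mul (hL : 0 ≤ L) (hγ : 0 < γ) (hη : 0 ≤ η) {x : ℝ} (hx : 0 ≤ x) :
    riccatiField L γ η x ≤ (1 + η) * riccatiField L γ 0 x := by
  unfold riccatiField
  nlinarith [mul_nonneg hη (mul_nonneg hL hx), mul_nonneg hη hγ.le]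

theorem continuousOn_transitTime (hL : 0 ≤ L) (hγ : 0 < γ) (hη : 0 ≤ η) :
    ContinuousOn (transitTime L γ η) (Ioi 0) := by
  set f := fun x => (riccatiField L γ η x)⁻¹
  have hf : ContinuousOn f (Ici 0) :=
    continuous_riccatiField.continuousOn.inv₀ fun x hx => (riccatiField_pos hL hγ hη hx).ne'
  have hint : ∀ {x y : ℝ}, 0 < x → 0 < y → IntervalIntegrable f volume x y := fun hx hy =>
    (hf.mono fun t ht => le_min hx.le hy.le |>.trans ht.1).intervalIntegrable
  have hprim : ContinuousOn (fun y => ∫ x in (1)..y, f x) (Ioi 0) := fun y hy =>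
    (integral_hasDerivAt_right (hint one_pos hy)
      ((hf.mono Ioi_subset_Ici_self).stronglyMeasurableAtFilter isOpen_Ioi y hy)
      (hf.continuousAt (Ici_mem_nhds hy))).continuousAt.continuousWithinAt
  have hinv : ContinuousOn (fun m : ℝ => 1 / m) (Ioi 0) :=
    continuousOn_const.div continuousOn_id fun m hm => (mem_Ioi.1 hm).ne'
  refine ((hprim.comp hinv fun m (hm : 0 < m) => one_div_pos.2 hm).sub hprim).congr fun m hm => ?_
  exact (integral_interval_sub_left (hint one_pos (one_div_pos.2 hm)) (hint one_pos hm)).symm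

theorem transitTime_div_le (hL : 0 ≤ L) (hγ : 0 < γ) (hη : 0 ≤ η) {m : ℝ} (hm0 : 0 < m)
    (hm1 : m ≤ 1) : transitTime L γ 0 m / (1 + η) ≤ transitTime L γ η m := by
  have hm : m ≤ 1 / m := hm1.trans (one_le_one_div hm0 hm1)
  have hpos : ∀ η' : ℝ, 0 ≤ η' → ∀ x ∈ Icc m (1 / m), 0 < riccatiField L γ η' x :=
    fun η' hη' x hx => riccatiField_pos hL hγ hη' (hm0.le.trans hx.1)
  have hint : ∀ η' : ℝ, 0 ≤ η' →
      IntervalIntegrable (fun x => (riccatiField L γ η' x)⁻¹) volume m (1 / m) := fun η' hη' =>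
    (continuous_riccatiField.continuousOn.inv₀ fun x hx =>
      (hpos η' hη' x hx).ne').intervalIntegrable_of_Icc hm
  rw [transitTime, transitTime, ← intervalIntegral.integral_div]
  refine integral_mono_on hm ((hint 0 le_rfl).div_const _) (hint η hη) fun x hx => ?_
  rw [div_eq_inv_mul, ← mul_inv]
  exact inv_anti₀ (hpos η hη x hx)
    (mul_comm (1 + η) _ ▸ riccatiField_le_mul hL hγ hη (hm0.le.trans hx.1))

end Riccati

/-- Lemma 1 of the paper: if `τ` is strictly less than the transit time `T` of the
unperturbed Riccati ODE `φ' = −2Lφ − γ(φ²+1)` from `1/λ` to `λ`, then there exist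
`λ* ∈ (λ, 1)` and `η > 0` such that the solution of the perturbed ODE
`φ' = −2Lφ − γ((1+η)φ² + 1)` with `φ(0) = 1/λ*` satisfies `φ(τ) = λ*` and
`φ(s) ∈ [λ*, 1/λ*]` for all `s ∈ [0, τ]`. -/
theorem stmt_6 (L γ l τ T : ℝ) (hL : 0 ≤ L) (hγ : 0 < γ) (hl : l ∈ Ioo (0 : ℝ) 1)
    (φ₀ : ℝ → ℝ)
    (hode₀ : ∀ s ∈ Icc (0 : ℝ) T, HasDerivAt φ₀ (-2 * L * φ₀ s - γ * ((φ₀ s) ^ 2 + 1)) s)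
    (h00 : φ₀ 0 = 1 / l) (hT : 0 < T) (hTl : φ₀ T = l) (hτ : 0 < τ) (hτT : τ < T) :
    ∃ lstar ∈ Ioo l 1, ∃ η > (0 : ℝ), ∃ φ : ℝ → ℝ,
      (∀ s ∈ Icc (0 : ℝ) τ,
        HasDerivAt φ (-2 * L * φ s - γ * ((1 + η) * (φ s) ^ 2 + 1)) s) ∧
      φ 0 = 1 / lstar ∧ φ τ = lstar ∧
      ∀ s ∈ Icc (0 : ℝ) τ, φ s ∈ Icc lstar (1 / lstar) := by
  obtain ⟨hl0, hl1⟩ := hl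
  have htransit₀ : transitTime L γ 0 l = T := by
    have := integral_inv_eq_of_hasDerivAt_eq_neg_comp continuous_riccatiField.continuousOn
      (fun x hx => riccatiField_pos hL hγ le_rfl (hl0.le.trans hx)) hT.le
      (fun s hs => (hode₀ s hs).congr_deriv (by unfold riccatiField; ring)) hTl
    rwa [h00] at this
  -- Then `1 + η = (T + τ) / (2τ)`, so `T / (1 + η) = 2Tτ / (T + τ) > τ`.
  set η := (T - τ) / (2 * τ)
  have hη : 0 < η := div_pos (by linarith) (by linarith)
  have htransit_l : τ < transitTime L γ η l := calc
    τ < T / (1 + η) := by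
      rw [lt_div_iff₀ (by linarith)]
      have : τ * (1 + η) = (T + τ) / 2 := by simp only [η]; field_simp; ring
      linarith
    _ ≤ transitTime L γ η l := htransit₀ ▸ transitTime_div_le hL hγ hη.le hl0 hl1.le
  obtain ⟨m, hm, hmτ⟩ := intermediate_value_Ioo' hl1.le
    ((continuousOn_transitTime hL hγ hη.le).mono fun x hx => hl0.trans_le hx.1)
    ⟨by simpa [transitTime] using hτ, htransit_l⟩
  have hm0 : 0 < m := hl0.trans hm.1
  obtain ⟨φ, hφ, hφ0, hφτ, hrange⟩ := exists_hasDerivAt_eq_neg_comp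
    (hm.2.le.trans (one_le_one_div hm0 hm.2.le)) continuous_riccatiField.continuousOn
    (fun x hx => riccatiField_pos hL hγ hη.le (hm0.le.trans hx.1)) hmτ
  exact ⟨m, hm, η, hη, φ,
    fun s hs => (hφ s hs).congr_deriv (by unfold riccatiField; ring), hφ0, hφτ, hrange⟩
end

section
/- Let U : [t₀, t₁] → ℝ≥0 be absolutely continuous, μ₁ > 0, Γ ≥ 0, and suppose U'(t) ≤ −μ₁ U(t) for almost every t with U(t) ≥ Γ. Then for all t ∈ [t₀, t₁], U(t) ≤ max{ U(t₀) e^{−μ₁ (t − t₀)}, Γ }. -/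
/-!
Fix `t` and let `τ` be the last time in `[t₀, t]` with `U τ ≤ Γ`. On `(τ, t)` we have `U > Γ`, so
there `U' ≤ -μ₁ U` and `U` decays exponentially from `τ` to `t`, giving `U t ≤ U τ ≤ Γ`. If there
is no such `τ`, the same decay runs from `t₀` and gives `U t ≤ U t₀ e^{-μ₁(t-t₀)}`.
-/

open Set Real

/-- The integrating factor `e^{μ t}` turns `U' ≤ -μ U` into antitonicity of `U e^{μ t}`. -/
theorem le_mul_exp_of_hasDerivAt_le_neg_mul {U U' : ℝ → ℝ} {μ a b : ℝ} (hab : a ≤ b)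
    (hU : ContinuousOn U (Icc a b)) (hU' : ∀ t ∈ Ioo a b, HasDerivAt U (U' t) t)
    (hdec : ∀ t ∈ Ioo a b, U' t ≤ -μ * U t) :
    U b ≤ U a * exp (-μ * (b - a)) := by
  have hderiv : ∀ t ∈ Ioo a b,
      HasDerivAt (fun s => U s * exp (μ * s)) ((U' t + μ * U t) * exp (μ * t)) t := by
    intro t ht
    have hexp : HasDerivAt (fun s => exp (μ * s)) (exp (μ * t) * μ) t := by
      simpa using ((hasDerivAt_id t).const_mul μ).exp
    exact ((hU' t ht).mul hexp).congr_deriv (by ring)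
  have hanti : AntitoneOn (fun s => U s * exp (μ * s)) (Icc a b) := by
    refine antitoneOn_of_deriv_nonpos (convex_Icc a b) (hU.mul (by fun_prop)) ?_ ?_ <;>
      rw [interior_Icc]
    · exact fun t ht => (hderiv t ht).differentiableAt.differentiableWithinAt
    · intro t ht
      rw [(hderiv t ht).deriv]
      exact mul_nonpos_of_nonpos_of_nonneg (by linarith [hdec t ht]) (exp_pos _).le
  have hab' : U b * exp (μ * b) ≤ U a * exp (μ * a) :=
    hanti (left_mem_Icc.2 hab) (right_mem_Icc.2 hab) hab
  calc U b = U b * exp (μ * b) * exp (-(μ * b)) := by rw [mul_assoc, ← exp_add]; simp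
    _ ≤ U a * exp (μ * a) * exp (-(μ * b)) := by gcongr
    _ = U a * exp (-μ * (b - a)) := by rw [mul_assoc, ← exp_add]; ring_nf

theorem stmt_10_general (t₀ t₁ μ₁ Γ : ℝ) (hμ : 0 < μ₁)
    (U U' : ℝ → ℝ) (hnn : ∀ t ∈ Icc t₀ t₁, 0 ≤ U t)
    (hderiv : ∀ t ∈ Icc t₀ t₁, HasDerivAt U (U' t) t)
    (hdec : ∀ t ∈ Icc t₀ t₁, Γ ≤ U t → U' t ≤ -μ₁ * U t) :
    ∀ t ∈ Icc t₀ t₁, U t ≤ max (U t₀ * Real.exp (-μ₁ * (t - t₀))) Γ := by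
  intro t ht
  have hsub : Icc t₀ t ⊆ Icc t₀ t₁ := Icc_subset_Icc_right ht.2
  have hcont : ContinuousOn U (Icc t₀ t) :=
    fun s hs => (hderiv s (hsub hs)).continuousAt.continuousWithinAt
  have decay : ∀ a ∈ Icc t₀ t, (∀ s ∈ Ioo a t, Γ ≤ U s) → U t ≤ U a * exp (-μ₁ * (t - a)) :=
    fun a ha hΓU => le_mul_exp_of_hasDerivAt_le_neg_mul ha.2
      (hcont.mono (Icc_subset_Icc_left ha.1))
      (fun s hs => hderiv s (hsub ⟨ha.1.trans hs.1.le, hs.2.le⟩))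
      (fun s hs => hdec s (hsub ⟨ha.1.trans hs.1.le, hs.2.le⟩) (hΓU s hs))
  set A := Icc t₀ t ∩ U ⁻¹' Iic Γ
  rcases A.eq_empty_or_nonempty with hA | hA
  · refine le_max_of_le_left (decay t₀ (left_mem_Icc.2 ht.1) fun s hs => ?_)
    by_contra! hs'
    exact hA.subset ⟨Ioo_subset_Icc_self hs, hs'.le⟩
  · have hbdd : BddAbove A := bddAbove_Icc.mono inter_subset_left
    obtain ⟨hτ, hUτ⟩ : sSup A ∈ A :=
      (hcont.preimage_isClosed_of_isClosed isClosed_Icc isClosed_Iic).csSup_mem hA hbdd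
    refine le_max_of_le_right ((decay _ hτ fun s hs => ?_).trans ?_)
    · by_contra! hs'
      exact (le_csSup hbdd ⟨⟨hτ.1.trans hs.1.le, hs.2.le⟩, hs'.le⟩).not_gt hs.1
    · calc U (sSup A) * exp (-μ₁ * (t - sSup A)) ≤ U (sSup A) :=
            mul_le_of_le_one_right (hnn _ (hsub hτ)) (exp_le_one_iff.2 (by nlinarith [hτ.2]))
        _ ≤ Γ := hUτ

/-- Comparison principle: a nonnegative differentiable function whose derivative is
dominated by `−μ₁ U` whenever `U ≥ Γ` satisfies
`U(t) ≤ max { U(t₀) e^{−μ₁(t−t₀)}, Γ }` on `[t₀, t₁]`. -/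
theorem stmt_10 (t₀ t₁ μ₁ Γ : ℝ) (hμ : 0 < μ₁) (hΓ : 0 ≤ Γ)
    (U U' : ℝ → ℝ) (hnn : ∀ t ∈ Icc t₀ t₁, 0 ≤ U t)
    (hderiv : ∀ t ∈ Icc t₀ t₁, HasDerivAt U (U' t) t)
    (hdec : ∀ t ∈ Icc t₀ t₁, Γ ≤ U t → U' t ≤ -μ₁ * U t) :
    ∀ t ∈ Icc t₀ t₁, U t ≤ max (U t₀ * Real.exp (-μ₁ * (t - t₀))) Γ :=
  stmt_10_general t₀ t₁ μ₁ Γ hμ U U' hnn hderiv hdec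
end
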